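/- Let z₁,…,z_N ∈ ℂ with Im z_n > 0, let Δ⁻ ⊆ {1,…,N}, let r : ℝ → ℂ be continuous and bounded, let ν(s) = −(1/(2π)) log(1 + |r(s)|²), let k₄ < k₃ < 0 < k₂ < k₁ be real numbers, I = (k₄,k₃) ∪ (k₂,k₁), δ(k) = exp( i ∫_I ν(s)/(s−k) ds ) for k ∈ ℂ∖closure(I), and T(k) = ∏_{n∈Δ⁻} (k − conj(z_n))/(k − z_n) · δ(k). Then: (a) T(k) · conj(T(conj(k))) = 1 for every k ∈ ℂ ∖ (closure(I) ∪ {z_n : n∈Δ⁻} ∪ {conj(z_n) : n∈Δ⁻}); (b) there exist constants C > 0 and R > 0 such that for all k ∈ ℂ with |k| ≥ R, | T(k) − 1 − (i/k) ( 2 Σ_{n∈Δ⁻} Im z_n − ∫_I ν(s) ds ) | ≤ C |k|^{−2}. -/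

import Mathlib

open MeasureTheory Filter Asymptotics Bornology

/-- `ν(s) = −(1/2π) log(1 + |r(s)|²)`. -/
noncomputable def nuFun (r : ℝ → ℂ) (s : ℝ) : ℝ :=
  -(1 / (2 * Real.pi)) * Real.log (1 + ‖r s‖ ^ 2)

/-- `δ(k) = exp( i ∫_I ν(s)/(s−k) ds )`. -/
noncomputable def deltaFun (ν : ℝ → ℝ) (I : Set ℝ) (k : ℂ) : ℂ :=
  Complex.exp (Complex.I * ∫ s in I, ((ν s : ℂ) / ((s : ℂ) - k)))

/-- `T(k) = ∏_{n∈Δ⁻} (k − conj z_n)/(k − z_n) · δ(k)`. -/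
noncomputable def Tfun {N : ℕ} (z : Fin N → ℂ) (Δ : Finset (Fin N))
    (ν : ℝ → ℝ) (I : Set ℝ) (k : ℂ) : ℂ :=
  (∏ n ∈ Δ, (k - starRingEnd ℂ (z n)) / (k - z n)) * deltaFun ν I k

section Helpers

lemma extractR (P : ℂ → Prop) (h : ∀ᶠ k in cobounded ℂ, P k) :
    ∃ R : ℝ, ∀ k : ℂ, R ≤ ‖k‖ → P k := by
  rw [← comap_norm_atTop, Filter.eventually_comap] at h
  rcases Filter.eventually_atTop.1 h with ⟨R, hR⟩
  exact ⟨R, fun k hk => hR ‖k‖ hk k rfl⟩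

lemma inv_sub_bigO (z : ℂ) : (fun k : ℂ => (k - z)⁻¹) =O[cobounded ℂ] fun k => ‖k‖⁻¹ := by
  apply IsBigO.of_bound 2
  filter_upwards [eventually_cobounded_le_norm (2 * ‖z‖ + 2)] with k hk
  have hk0 : (0:ℝ) < ‖k‖ := lt_of_lt_of_le (by positivity) hk
  have hkz : ‖k‖ / 2 ≤ ‖k - z‖ := by
    have h1 := norm_sub_norm_le k z
    have h2 : (0:ℝ) ≤ ‖z‖ := norm_nonneg z
    linarith
  calc ‖(k - z)⁻¹‖ = ‖k - z‖⁻¹ := norm_inv _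
    _ ≤ (‖k‖ / 2)⁻¹ := by
        apply inv_anti₀ (by positivity) hkz
    _ = 2 * ‖k‖⁻¹ := by rw [inv_div, div_eq_mul_inv]
    _ = 2 * ‖‖k‖⁻¹‖ := by rw [Real.norm_eq_abs, _root_.abs_of_nonneg (by positivity)]

lemma inv_mul_sub_bigO (z : ℂ) :
    (fun k : ℂ => (k * (k - z))⁻¹) =O[cobounded ℂ] fun k => (‖k‖ ^ 2)⁻¹ := by
  apply IsBigO.of_bound 2
  filter_upwards [eventually_cobounded_le_norm (2 * ‖z‖ + 2)] with k hk
  have hk0 : (0:ℝ) < ‖k‖ := lt_of_lt_of_le (by positivity) hk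
  have hkz : ‖k‖ / 2 ≤ ‖k - z‖ := by
    have h1 := norm_sub_norm_le k z
    have h2 : (0:ℝ) ≤ ‖z‖ := norm_nonneg z
    linarith
  calc ‖(k * (k - z))⁻¹‖ = (‖k‖ * ‖k - z‖)⁻¹ := by rw [norm_inv, norm_mul]
    _ ≤ (‖k‖ * (‖k‖ / 2))⁻¹ := by
        apply inv_anti₀ (by positivity)
        exact mul_le_mul_of_nonneg_left hkz (le_of_lt hk0)
    _ = 2 * (‖k‖ ^ 2)⁻¹ := by field_simp; try ring
    _ = 2 * ‖(‖k‖ ^ 2)⁻¹‖ := by rw [Real.norm_eq_abs, _root_.abs_of_nonneg (by positivity)]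

lemma factor_bigO1 (z : ℂ) :
    (fun k : ℂ => (k - starRingEnd ℂ z) / (k - z) - 1) =O[cobounded ℂ] fun k => ‖k‖⁻¹ := by
  have h : (fun k : ℂ => ((2 * z.im : ℝ) * Complex.I) * (k - z)⁻¹) =O[cobounded ℂ]
      fun k => ‖k‖⁻¹ := (inv_sub_bigO z).const_mul_left _
  apply h.congr' _ EventuallyEq.rfl
  filter_upwards [eventually_cobounded_le_norm (‖z‖ + 1)] with k hk
  have hkz : k ≠ z := by
    intro h; subst h; simp at hk; linarith
  have hkz' : k - z ≠ 0 := sub_ne_zero.2 hkz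
  rw [div_sub_one hkz']
  have h2 : k - starRingEnd ℂ z - (k - z) = ((2 * z.im : ℝ) : ℂ) * Complex.I := by
    rw [← Complex.sub_conj]; ring
  rw [h2, div_eq_mul_inv]


lemma factor_bigO2 (z : ℂ) :
    (fun k : ℂ => (k - starRingEnd ℂ z) / (k - z) - 1 - ((2 * z.im : ℝ) * Complex.I) / k)
      =O[cobounded ℂ] fun k => (‖k‖ ^ 2)⁻¹ := by
  have h : (fun k : ℂ => (((2 * z.im : ℝ) : ℂ) * Complex.I * z) * (k * (k - z))⁻¹)
      =O[cobounded ℂ] fun k => (‖k‖ ^ 2)⁻¹ := (inv_mul_sub_bigO z).const_mul_left _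
  apply h.congr' _ EventuallyEq.rfl
  filter_upwards [eventually_cobounded_le_norm (‖z‖ + 1)] with k hk
  have hkz : k ≠ z := by intro h; subst h; simp at hk; linarith
  have hk0 : k ≠ 0 := by
    intro h; subst h; simp at hk; have := norm_nonneg z; linarith
  have hkz' : k - z ≠ 0 := sub_ne_zero.2 hkz
  rw [div_sub_one hkz']
  have h2 : k - starRingEnd ℂ z - (k - z) = ((2 * z.im : ℝ) : ℂ) * Complex.I := by
    rw [← Complex.sub_conj]; ring
  rw [h2]
  field_simp
  ring

lemma const_div_bigO (c : ℂ) : (fun k : ℂ => c / k) =O[cobounded ℂ] fun k => ‖k‖⁻¹ := by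
  have base : (fun k : ℂ => k⁻¹) =O[cobounded ℂ] fun k => ‖k‖⁻¹ := by
    apply IsBigO.of_bound 1
    filter_upwards with k
    simp [norm_inv, Real.norm_eq_abs, _root_.abs_of_nonneg (inv_nonneg.2 (norm_nonneg k))]
  simpa [div_eq_mul_inv] using base.const_mul_left c

lemma inv_norm_bigO_one : (fun k : ℂ => ‖k‖⁻¹) =O[cobounded ℂ] (fun _ => (1:ℝ)) := by
  apply IsBigO.of_bound 1
  filter_upwards [eventually_cobounded_le_norm 1] with k hk
  have : ‖k‖⁻¹ ≤ 1 := by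
    rw [inv_le_one_iff₀]; right; exact hk
  simpa [Real.norm_eq_abs, _root_.abs_of_nonneg (inv_nonneg.2 (norm_nonneg k))]

lemma inv_sq_bigO_inv : (fun k : ℂ => (‖k‖ ^ 2)⁻¹) =O[cobounded ℂ] fun k => ‖k‖⁻¹ := by
  apply IsBigO.of_bound 1
  filter_upwards [eventually_cobounded_le_norm 1] with k hk
  have hk0 : (0:ℝ) < ‖k‖ := lt_of_lt_of_le one_pos hk
  have : (‖k‖ ^ 2)⁻¹ ≤ ‖k‖⁻¹ := by
    apply inv_anti₀ hk0
    nlinarith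
  simpa [Real.norm_eq_abs, _root_.abs_of_nonneg, inv_nonneg.2 (norm_nonneg k), hk0.le,
    _root_.abs_of_nonneg (inv_nonneg.2 (sq_nonneg ‖k‖)),
    _root_.abs_of_nonneg (inv_nonneg.2 (norm_nonneg k))]

lemma inv_mul_inv_eq : (fun k : ℂ => ‖k‖⁻¹ * ‖k‖⁻¹) = fun k : ℂ => (‖k‖ ^ 2)⁻¹ := by
  funext k; rw [← mul_inv, ← sq]

lemma prod_bigO {ι : Type*} [DecidableEq ι] (s : Finset ι) (F : ι → ℂ → ℂ) (c : ι → ℂ)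
    (h1 : ∀ n ∈ s, (fun k => F n k - 1) =O[cobounded ℂ] fun k => ‖k‖⁻¹)
    (h2 : ∀ n ∈ s, (fun k => F n k - 1 - c n / k) =O[cobounded ℂ] fun k => (‖k‖ ^ 2)⁻¹) :
    ((fun k => (∏ n ∈ s, F n k) - 1) =O[cobounded ℂ] fun k => ‖k‖⁻¹) ∧
    ((fun k => (∏ n ∈ s, F n k) - 1 - (∑ n ∈ s, c n) / k) =O[cobounded ℂ]
      fun k => (‖k‖ ^ 2)⁻¹) := by
  induction s using Finset.induction_on with
  | empty =>
      constructor
      · simpa using isBigO_zero _ _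
      · simpa using isBigO_zero _ _
  | insert a s ha ih =>
      obtain ⟨hQ1, hQ2⟩ := ih (fun n hn => h1 n (Finset.mem_insert_of_mem hn))
        (fun n hn => h2 n (Finset.mem_insert_of_mem hn))
      have hFa1 := h1 a (Finset.mem_insert_self a s)
      have hFa2 := h2 a (Finset.mem_insert_self a s)
      have hQ0 : (fun k => ∏ n ∈ s, F n k) =O[cobounded ℂ] (fun _ => (1:ℝ)) := by
        have := (hQ1.trans inv_norm_bigO_one).add
          (isBigO_const_const (1:ℂ) (one_ne_zero) (cobounded ℂ))
        simpa using this
      constructor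
      · have key : (fun k => (∏ n ∈ insert a s, F n k) - 1)
            = fun k => (F a k - 1) * (∏ n ∈ s, F n k) + ((∏ n ∈ s, F n k) - 1) := by
          funext k; rw [Finset.prod_insert ha]; ring
        rw [key]
        have t1 := hFa1.mul hQ0
        simp only [mul_one] at t1
        exact t1.add hQ1
      · have key : (fun k => (∏ n ∈ insert a s, F n k) - 1 - (∑ n ∈ insert a s, c n) / k)
            = fun k => (F a k - 1 - c a / k) * (∏ n ∈ s, F n k)
              + (c a / k) * ((∏ n ∈ s, F n k) - 1)
              + ((∏ n ∈ s, F n k) - 1 - (∑ n ∈ s, c n) / k) := by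
          funext k
          rw [Finset.prod_insert ha, Finset.sum_insert ha, add_div]
          ring
        rw [key]
        have t1 := hFa2.mul hQ0
        simp only [mul_one] at t1
        have t2 := (const_div_bigO (c a)).mul hQ1
        rw [inv_mul_inv_eq] at t2
        exact (t1.add t2).add hQ2

lemma delta_bigO (ν : ℝ → ℝ) (Iset : Set ℝ) (hmeas : MeasurableSet Iset)
    (hμ : volume Iset ≠ ⊤) (hνm : Measurable ν) (B : ℝ) (hB : ∀ s, |ν s| ≤ B)
    (L : ℝ) (hL : 0 < L) (hIL : ∀ s ∈ Iset, |s| ≤ L) :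
    (deltaFun ν Iset =O[cobounded ℂ] (fun _ => (1:ℝ))) ∧
    ((fun k => deltaFun ν Iset k - 1) =O[cobounded ℂ] fun k => ‖k‖⁻¹) ∧
    ((fun k => deltaFun ν Iset k - 1
        + Complex.I * (((∫ s in Iset, ν s) : ℝ) : ℂ) / k) =O[cobounded ℂ]
      fun k => (‖k‖ ^ 2)⁻¹) := by
  have hB0 : 0 ≤ B := le_trans (abs_nonneg _) (hB 0)
  set W : ℂ → ℂ := fun k => ∫ s in Iset, ((ν s : ℂ) / ((s : ℂ) - k)) with hW
  set A : ℂ → ℂ := fun k => Complex.I * W k with hA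
  have hδA : ∀ k, deltaFun ν Iset k = Complex.exp (A k) := fun k => rfl
  set q : ℝ := ∫ s in Iset, ν s with hq
  -- norm of s - k from below
  have hsk : ∀ k : ℂ, 2 * L + 2 ≤ ‖k‖ → ∀ s ∈ Iset, ‖k‖ / 2 ≤ ‖(s : ℂ) - k‖ := by
    intro k hk s hs
    have h1 : ‖(s:ℂ)‖ ≤ L := by
      rw [Complex.norm_real, Real.norm_eq_abs]; exact hIL s hs
    have h2 := norm_sub_norm_le k (s:ℂ)
    have h3 : ‖(s:ℂ) - k‖ = ‖k - (s:ℂ)‖ := by rw [norm_sub_rev]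
    linarith
  have hmbl : ∀ k : ℂ, AEStronglyMeasurable (fun s : ℝ => (ν s : ℂ) / ((s:ℂ) - k)) volume := by
    intro k
    exact ((Complex.measurable_ofReal.comp hνm).div
      ((Complex.measurable_ofReal).sub measurable_const)).aestronglyMeasurable
  have hνint : IntegrableOn ν Iset volume :=
    Measure.integrableOn_of_bounded hμ hνm.aestronglyMeasurable
      (Filter.Eventually.of_forall fun s => by simpa using hB s)
  -- pointwise bound for integrand
  have hpt1 : ∀ k : ℂ, 2 * L + 2 ≤ ‖k‖ → ∀ s ∈ Iset,
      ‖(ν s : ℂ) / ((s:ℂ) - k)‖ ≤ 2 * B / ‖k‖ := by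
    intro k hk s hs
    have hk0 : (0:ℝ) < ‖k‖ := by linarith
    have hd := hsk k hk s hs
    have hd0 : (0:ℝ) < ‖(s:ℂ) - k‖ := lt_of_lt_of_le (by linarith) hd
    rw [norm_div]
    have h1 : ‖((ν s : ℝ):ℂ)‖ ≤ B := by
      rw [Complex.norm_real, Real.norm_eq_abs]; exact hB s
    calc ‖((ν s : ℝ):ℂ)‖ / ‖(s:ℂ) - k‖ ≤ B / (‖k‖ / 2) :=
          div_le_div₀ hB0 h1 (by linarith) hd
      _ = 2 * B / ‖k‖ := by field_simp; try ring
  have hint : ∀ k : ℂ, 2 * L + 2 ≤ ‖k‖ →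
      IntegrableOn (fun s => (ν s : ℂ) / ((s:ℂ) - k)) Iset volume := by
    intro k hk
    exact Measure.integrableOn_of_bounded hμ (hmbl k)
      ((ae_restrict_iff' hmeas).2 (Filter.Eventually.of_forall (hpt1 k hk)))
  have hμlt : volume Iset < ⊤ := lt_top_iff_ne_top.2 hμ
  have hnormA : ∀ k, ‖A k‖ = ‖W k‖ := by
    intro k
    rw [hA]
    simp only [norm_mul, Complex.norm_I, one_mul]
  have hA1 : A =O[cobounded ℂ] fun k => ‖k‖⁻¹ := by
    apply IsBigO.of_bound (2 * B * (volume Iset).toReal)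
    filter_upwards [eventually_cobounded_le_norm (2 * L + 2)] with k hk
    have hk0 : (0:ℝ) < ‖k‖ := by linarith
    have h1 : ‖W k‖ ≤ (2 * B / ‖k‖) * (volume Iset).toReal :=
      norm_setIntegral_le_of_norm_le_const hμlt (hpt1 k hk)
    rw [hnormA]
    calc ‖W k‖ ≤ (2 * B / ‖k‖) * (volume Iset).toReal := h1
      _ = 2 * B * (volume Iset).toReal * ‖k‖⁻¹ := by field_simp; try ring
      _ = 2 * B * (volume Iset).toReal * ‖‖k‖⁻¹‖ := by
          rw [Real.norm_eq_abs, _root_.abs_of_nonneg (inv_nonneg.2 hk0.le)]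
  have hpt2 : ∀ k : ℂ, 2 * L + 2 ≤ ‖k‖ → ∀ s ∈ Iset,
      ‖(ν s : ℂ) / ((s:ℂ) - k) + (ν s : ℂ) / k‖ ≤ 2 * B * L / ‖k‖ ^ 2 := by
    intro k hk s hs
    have hk0 : (0:ℝ) < ‖k‖ := by linarith
    have hd := hsk k hk s hs
    have hd0 : (0:ℝ) < ‖(s:ℂ) - k‖ := lt_of_lt_of_le (by linarith) hd
    have hkne : k ≠ 0 := fun h => by rw [h] at hk0; simp at hk0
    have hske : (s:ℂ) - k ≠ 0 := fun h => by rw [h] at hd0; simp at hd0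
    have hid : (ν s : ℂ) / ((s:ℂ) - k) + (ν s : ℂ) / k
        = ((ν s : ℂ) * (s:ℂ)) / (((s:ℂ) - k) * k) := by
      field_simp
      try ring
    rw [hid, norm_div, norm_mul]
    have h1 : ‖((ν s : ℝ):ℂ)‖ ≤ B := by
      rw [Complex.norm_real, Real.norm_eq_abs]; exact hB s
    have h2 : ‖((s : ℝ):ℂ)‖ ≤ L := by
      rw [Complex.norm_real, Real.norm_eq_abs]; exact hIL s hs
    calc ‖((ν s : ℝ):ℂ)‖ * ‖((s:ℝ):ℂ)‖ / ‖((s:ℂ) - k) * k‖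
        ≤ (B * L) / ((‖k‖ / 2) * ‖k‖) := by
          apply div_le_div₀ (by positivity)
            (mul_le_mul h1 h2 (norm_nonneg _) hB0) (by positivity)
          rw [norm_mul]
          exact mul_le_mul_of_nonneg_right hd hk0.le
      _ = 2 * B * L / ‖k‖ ^ 2 := by field_simp; try ring
  have hA2 : (fun k => A k + Complex.I * ((q : ℝ) : ℂ) / k) =O[cobounded ℂ]
      fun k => (‖k‖ ^ 2)⁻¹ := by
    apply IsBigO.of_bound (2 * B * L * (volume Iset).toReal)
    filter_upwards [eventually_cobounded_le_norm (2 * L + 2)] with k hk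
    have hk0 : (0:ℝ) < ‖k‖ := by linarith
    have hsum : W k + ((q : ℝ) : ℂ) / k
        = ∫ s in Iset, ((ν s : ℂ) / ((s:ℂ) - k) + (ν s : ℂ) / k) := by
      have e1 : ((q : ℝ) : ℂ) / k = ∫ s in Iset, (ν s : ℂ) / k := by
        rw [integral_div]
        congr 1
        exact integral_ofReal.symm
      rw [e1, hW]
      exact (integral_add (hint k hk) ((hνint.ofReal).div_const k)).symm
    have hm2 : AEStronglyMeasurable (fun s : ℝ => (ν s : ℂ) / ((s:ℂ) - k) + (ν s : ℂ) / k)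
        (volume.restrict Iset) :=
      (hmbl k).restrict.add
        (((Complex.measurable_ofReal.comp hνm).div measurable_const).aestronglyMeasurable.restrict)
    have h1 : ‖W k + ((q : ℝ) : ℂ) / k‖ ≤ (2 * B * L / ‖k‖ ^ 2) * (volume Iset).toReal := by
      rw [hsum]
      exact norm_setIntegral_le_of_norm_le_const hμlt (hpt2 k hk)
    have h2 : A k + Complex.I * ((q : ℝ) : ℂ) / k
        = Complex.I * (W k + ((q : ℝ) : ℂ) / k) := by rw [hA]; ring
    rw [h2]
    simp only [norm_mul, Complex.norm_I, one_mul]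
    calc ‖W k + ((q : ℝ) : ℂ) / k‖ ≤ (2 * B * L / ‖k‖ ^ 2) * (volume Iset).toReal := h1
      _ = 2 * B * L * (volume Iset).toReal * (‖k‖ ^ 2)⁻¹ := by field_simp; try ring
      _ = 2 * B * L * (volume Iset).toReal * ‖(‖k‖ ^ 2)⁻¹‖ := by
          rw [Real.norm_eq_abs, _root_.abs_of_nonneg (by positivity)]
  have hA0 : ∀ᶠ k in cobounded ℂ, ‖A k‖ ≤ 1 := by
    obtain ⟨C, hC⟩ := hA1.bound
    filter_upwards [hC, eventually_cobounded_le_norm (max C 1)] with k h1 h2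
    have hk1 : (1:ℝ) ≤ ‖k‖ := le_trans (le_max_right _ _) h2
    have hk0 : (0:ℝ) < ‖k‖ := by linarith
    have e : ‖‖k‖⁻¹‖ = ‖k‖⁻¹ := by
      rw [Real.norm_eq_abs, _root_.abs_of_nonneg (inv_nonneg.2 hk0.le)]
    rw [e] at h1
    calc ‖A k‖ ≤ C * ‖k‖⁻¹ := h1
      _ ≤ ‖k‖ * ‖k‖⁻¹ := by
          apply mul_le_mul_of_nonneg_right _ (inv_nonneg.2 hk0.le)
          exact le_trans (le_max_left _ _) h2
      _ = 1 := mul_inv_cancel₀ hk0.ne'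
  have hδ0 : deltaFun ν Iset =O[cobounded ℂ] (fun _ => (1:ℝ)) := by
    apply IsBigO.of_bound (Real.exp 1)
    filter_upwards [hA0] with k hk
    rw [hδA]
    have h1 : ‖Complex.exp (A k)‖ = Real.exp (A k).re := by
      rw [Complex.norm_exp]
    have h2 : (A k).re ≤ 1 := by
      calc (A k).re ≤ |(A k).re| := le_abs_self _
        _ ≤ ‖A k‖ := Complex.abs_re_le_norm _
        _ = ‖A k‖ := rfl
        _ ≤ 1 := hk
    rw [h1]
    simpa using Real.exp_le_exp.2 h2
  have hexp : (fun k => Complex.exp (A k) - 1 - A k) =O[cobounded ℂ]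
      fun k => (‖k‖ ^ 2)⁻¹ := by
    have step1 : (fun k => Complex.exp (A k) - 1 - A k) =O[cobounded ℂ]
        fun k => ‖A k‖ ^ 2 := by
      apply IsBigO.of_bound 1
      filter_upwards [hA0] with k hk
      have h := Complex.norm_exp_sub_one_sub_id_le (x := A k)
        (by exact hk)
      rw [one_mul, Real.norm_eq_abs, _root_.abs_of_nonneg (sq_nonneg _)]
      calc ‖Complex.exp (A k) - 1 - A k‖ = ‖Complex.exp (A k) - 1 - A k‖ :=
            rfl
        _ ≤ ‖A k‖ ^ 2 := h
        _ = ‖A k‖ ^ 2 := rfl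
    have step2 : (fun k : ℂ => ‖A k‖ ^ 2) =O[cobounded ℂ] fun k => (‖k‖ ^ 2)⁻¹ := by
      have h := (hA1.norm_left).pow 2
      have e : (fun k : ℂ => ‖k‖⁻¹ ^ 2) = fun k : ℂ => (‖k‖ ^ 2)⁻¹ :=
        funext fun k => inv_pow _ _
      rwa [e] at h
    exact step1.trans step2
  refine ⟨hδ0, ?_, ?_⟩
  · have key : (fun k => deltaFun ν Iset k - 1)
        = fun k => (Complex.exp (A k) - 1 - A k) + A k := by
      funext k; rw [hδA]; ring
    rw [key]
    exact (hexp.trans inv_sq_bigO_inv).add hA1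
  · have key : (fun k => deltaFun ν Iset k - 1 + Complex.I * ((q : ℝ) : ℂ) / k)
        = fun k => (Complex.exp (A k) - 1 - A k) + (A k + Complex.I * ((q : ℝ) : ℂ) / k) := by
      funext k; rw [hδA]; ring
    rw [key]
    exact hexp.add hA2

end Helpers

/-- Symmetry `T(k)·conj(T(conj k)) = 1` and the large-`k` expansion of `T`. -/
theorem stmt9 (N : ℕ) (z : Fin N → ℂ) (hz : ∀ n, 0 < (z n).im)
    (Δ : Finset (Fin N)) (r : ℝ → ℂ) (hrc : Continuous r) (hrb : ∃ M : ℝ, ∀ s, ‖r s‖ ≤ M)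
    (k₄ k₃ k₂ k₁ : ℝ) (h43 : k₄ < k₃) (h30 : k₃ < 0) (h02 : 0 < k₂) (h21 : k₂ < k₁) :
    -- (a)
    (∀ k : ℂ,
      k ∉ closure (Complex.ofReal '' (Set.Ioo k₄ k₃ ∪ Set.Ioo k₂ k₁)) →
      (∀ n ∈ Δ, k ≠ z n) → (∀ n ∈ Δ, k ≠ starRingEnd ℂ (z n)) →
      Tfun z Δ (nuFun r) (Set.Ioo k₄ k₃ ∪ Set.Ioo k₂ k₁) k
          * starRingEnd ℂ
              (Tfun z Δ (nuFun r) (Set.Ioo k₄ k₃ ∪ Set.Ioo k₂ k₁) (starRingEnd ℂ k)) = 1) ∧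
    -- (b)
    (∃ C : ℝ, 0 < C ∧ ∃ R : ℝ, 0 < R ∧ ∀ k : ℂ, R ≤ ‖k‖ →
      ‖Tfun z Δ (nuFun r) (Set.Ioo k₄ k₃ ∪ Set.Ioo k₂ k₁) k - 1
          - (Complex.I / k) * (Complex.ofReal
              (2 * (∑ n ∈ Δ, (z n).im)
                - ∫ s in (Set.Ioo k₄ k₃ ∪ Set.Ioo k₂ k₁), nuFun r s))‖
        ≤ C / ‖k‖ ^ 2) := by
  constructor
  · -- part (a)
    intro k _hcl hz1 hz2
    unfold Tfun
    set ν := nuFun r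
    set Iset := Set.Ioo k₄ k₃ ∪ Set.Ioo k₂ k₁
    have hδ : deltaFun ν Iset k * starRingEnd ℂ (deltaFun ν Iset (starRingEnd ℂ k)) = 1 := by
      unfold deltaFun
      rw [← Complex.exp_conj, ← Complex.exp_add]
      rw [map_mul, Complex.conj_I]
      rw [← integral_conj]
      have : (fun s => (starRingEnd ℂ) ((ν s : ℂ) / ((s:ℂ) - starRingEnd ℂ k)))
          = fun s => (ν s : ℂ) / ((s:ℂ) - k) := by
        funext s
        rw [map_div₀, map_sub, Complex.conj_ofReal, Complex.conj_ofReal, Complex.conj_conj k]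
      rw [this]
      convert Complex.exp_zero using 2
      ring
    have hP : (∏ n ∈ Δ, (k - starRingEnd ℂ (z n)) / (k - z n)) *
        starRingEnd ℂ (∏ n ∈ Δ,
          (starRingEnd ℂ k - starRingEnd ℂ (z n)) / (starRingEnd ℂ k - z n)) = 1 := by
      rw [map_prod, ← Finset.prod_mul_distrib]
      apply Finset.prod_eq_one
      intro n hn
      rw [map_div₀, map_sub, map_sub, Complex.conj_conj k, Complex.conj_conj (z n)]
      have h1 : k - z n ≠ 0 := sub_ne_zero.2 (hz1 n hn)
      have h2 : k - starRingEnd ℂ (z n) ≠ 0 := sub_ne_zero.2 (hz2 n hn)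
      field_simp
    calc _ = ((∏ n ∈ Δ, (k - starRingEnd ℂ (z n)) / (k - z n)) *
        starRingEnd ℂ (∏ n ∈ Δ,
          (starRingEnd ℂ k - starRingEnd ℂ (z n)) / (starRingEnd ℂ k - z n))) *
        (deltaFun ν Iset k * starRingEnd ℂ (deltaFun ν Iset (starRingEnd ℂ k))) := by
          rw [map_mul]; ring
      _ = 1 := by rw [hδ, hP, one_mul]
  · -- part (b)
    classical
    set ν := nuFun r with hν
    set Iset := Set.Ioo k₄ k₃ ∪ Set.Ioo k₂ k₁ with hIset
    -- basic facts
    have hmeas : MeasurableSet Iset := measurableSet_Ioo.union measurableSet_Ioo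
    have hμ : volume Iset ≠ ⊤ := by
      have h1 : volume Iset ≤ volume (Set.Ioo k₄ k₃) + volume (Set.Ioo k₂ k₁) :=
        measure_union_le _ _
      rw [Real.volume_Ioo, Real.volume_Ioo] at h1
      exact ne_top_of_le_ne_top
        (ENNReal.add_ne_top.2 ⟨ENNReal.ofReal_ne_top, ENNReal.ofReal_ne_top⟩) h1
    have hνc : Continuous ν := by
      rw [hν]; unfold nuFun
      exact continuous_const.mul
        ((continuous_const.add ((hrc.norm).pow 2)).log (fun x => by show (1:ℝ) + ‖r x‖ ^ 2 ≠ 0; positivity))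
    have hνm : Measurable ν := hνc.measurable
    obtain ⟨M, hM⟩ := hrb
    set M' : ℝ := max M 0 with hM'
    set B : ℝ := (1 / (2 * Real.pi)) * Real.log (1 + M' ^ 2) with hBdef
    have hπ : (0:ℝ) < 1 / (2 * Real.pi) := by positivity
    have hB : ∀ s, |ν s| ≤ B := by
      intro s
      have h1 : (0:ℝ) ≤ Real.log (1 + ‖r s‖ ^ 2) :=
        Real.log_nonneg (by nlinarith [norm_nonneg (r s)])
      have h2 : Real.log (1 + ‖r s‖ ^ 2) ≤ Real.log (1 + M' ^ 2) := by
        apply Real.log_le_log (by positivity)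
        have h3 : ‖r s‖ ≤ M' := le_trans (hM s) (le_max_left _ _)
        nlinarith [norm_nonneg (r s)]
      have h4 : ν s = -(1 / (2 * Real.pi)) * Real.log (1 + ‖r s‖ ^ 2) := rfl
      rw [h4, neg_mul, abs_neg, abs_mul, _root_.abs_of_nonneg hπ.le,
        _root_.abs_of_nonneg h1, hBdef]
      exact mul_le_mul_of_nonneg_left h2 hπ.le
    set L : ℝ := max (-k₄) k₁ with hLdef
    have hL : 0 < L := lt_of_lt_of_le (h02.trans h21) (le_max_right _ _)
    have hIL : ∀ s ∈ Iset, |s| ≤ L := by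
      intro s hs
      have hL1 : -k₄ ≤ L := le_max_left _ _
      have hL2 : k₁ ≤ L := le_max_right _ _
      rcases hs with hs | hs
      · rcases hs with ⟨h5, h6⟩
        rw [abs_le]; constructor <;> linarith
      · rcases hs with ⟨h5, h6⟩
        rw [abs_le]; constructor <;> linarith
    obtain ⟨hδ0, hδ1, hδ2⟩ := delta_bigO ν Iset hmeas hμ hνm B hB L hL hIL
    -- product asymptotics
    set F : Fin N → ℂ → ℂ := fun n k => (k - starRingEnd ℂ (z n)) / (k - z n) with hF
    set c : Fin N → ℂ := fun n => ((2 * (z n).im : ℝ) : ℂ) * Complex.I with hc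
    obtain ⟨hP1, hP2⟩ := prod_bigO Δ F c (fun n _ => factor_bigO1 (z n))
      (fun n _ => factor_bigO2 (z n))
    have hP0 : (fun k => ∏ n ∈ Δ, F n k) =O[Bornology.cobounded ℂ] (fun _ => (1:ℝ)) := by
      have := (hP1.trans inv_norm_bigO_one).add
        (isBigO_const_const (1:ℂ) (one_ne_zero) (Bornology.cobounded ℂ))
      simpa using this
    have hsum : (∑ n ∈ Δ, c n)
        = ((2 * (∑ n ∈ Δ, (z n).im) : ℝ) : ℂ) * Complex.I := by
      rw [hc, ← Finset.sum_mul]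
      congr 1
      push_cast
      rw [Finset.mul_sum]
    -- assemble
    have hbig : (fun k => Tfun z Δ ν Iset k - 1
        - (Complex.I / k) * (Complex.ofReal
            (2 * (∑ n ∈ Δ, (z n).im) - ∫ s in Iset, ν s)))
        =O[Bornology.cobounded ℂ] fun k => (‖k‖ ^ 2)⁻¹ := by
      have key : (fun k => Tfun z Δ ν Iset k - 1
          - (Complex.I / k) * (Complex.ofReal
              (2 * (∑ n ∈ Δ, (z n).im) - ∫ s in Iset, ν s)))
          = fun k => ((∏ n ∈ Δ, F n k) - 1 - (∑ n ∈ Δ, c n) / k) * deltaFun ν Iset k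
            + ((∑ n ∈ Δ, c n) / k) * (deltaFun ν Iset k - 1)
            + (deltaFun ν Iset k - 1
                + Complex.I * (((∫ s in Iset, ν s) : ℝ) : ℂ) / k) := by
        funext k
        rw [hsum]
        unfold Tfun
        rw [Complex.ofReal_sub]
        push_cast
        ring
      rw [key]
      have t1 := hP2.mul hδ0
      simp only [mul_one] at t1
      have t2 := (const_div_bigO (∑ n ∈ Δ, c n)).mul hδ1
      rw [inv_mul_inv_eq] at t2
      exact (t1.add t2).add hδ2
    obtain ⟨C, hC⟩ := hbig.bound
    obtain ⟨R, hR⟩ := extractR _ (hC.and (eventually_cobounded_le_norm 1))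
    refine ⟨max C 1, lt_of_lt_of_le one_pos (le_max_right _ _),
      max R 1, lt_of_lt_of_le one_pos (le_max_right _ _), ?_⟩
    intro k hk
    have hkR : R ≤ ‖k‖ := le_trans (le_max_left _ _) hk
    obtain ⟨h1, h2⟩ := hR k hkR
    have hk0 : (0:ℝ) < ‖k‖ := lt_of_lt_of_le one_pos h2
    have e : ‖(‖k‖ ^ 2)⁻¹‖ = (‖k‖ ^ 2)⁻¹ := by
      rw [Real.norm_eq_abs, _root_.abs_of_nonneg (by positivity)]
    rw [e] at h1
    calc _ ≤ C * (‖k‖ ^ 2)⁻¹ := h1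
      _ ≤ (max C 1) * (‖k‖ ^ 2)⁻¹ :=
          mul_le_mul_of_nonneg_right (le_max_left _ _) (by positivity)
      _ = max C 1 / ‖k‖ ^ 2 := by rw [div_eq_mul_inv]
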